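/- If a lambda-calculus expression a has a key redex and a single-step reduces to b without contracting that key redex, then b also has a key redex, and red_k(a) multi-step reduces to red_k(b). -/

import Mathlib

/-!
Induction on the spine leading to the key redex. At the redex `(λ A. t) u` itself, a step
inside `A` leaves the contractum `[u/0]t` unchanged, a step `t ⇝ t'` survives substitution,
and a step `u ⇝ u'` becomes one step per occurrence of the variable in `[u/0]t`. Further up
the spine, a step in the head is handled inductively and a step in an argument commutes with
the key contraction.
-/

/-- Expressions of a pure type system: sorts, de Bruijn variables,
dependent products, annotated abstractions, applications. -/
inductive Expr : Type
  | sort : Nat → Expr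
  | var : Nat → Expr
  | pi : Expr → Expr → Expr
  | lam : Expr → Expr → Expr
  | app : Expr → Expr → Expr
  deriving DecidableEq

/-- Lift free de Bruijn variables `≥ k` by `d`. -/
def Expr.lift (d k : Nat) : Expr → Expr
  | .sort s => .sort s
  | .var n => if n < k then .var n else .var (n + d)
  | .pi A B => .pi (Expr.lift d k A) (Expr.lift d (k+1) B)
  | .lam A b => .lam (Expr.lift d k A) (Expr.lift d (k+1) b)
  | .app a b => .app (Expr.lift d k a) (Expr.lift d k b)

/-- Capture-avoiding substitution of `e` for variable `k`. -/
def Expr.subst (e : Expr) (k : Nat) : Expr → Expr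
  | .sort s => .sort s
  | .var n => if n < k then .var n else if n = k then Expr.lift k 0 e else .var (n - 1)
  | .pi A B => .pi (Expr.subst e k A) (Expr.subst e (k+1) B)
  | .lam A b => .lam (Expr.subst e k A) (Expr.subst e (k+1) b)
  | .app a b => .app (Expr.subst e k a) (Expr.subst e k b)

/-- One-step beta reduction, with full congruence rules. -/
inductive Step : Expr → Expr → Prop
  | beta (A b a : Expr) : Step (.app (.lam A b) a) (Expr.subst a 0 b)
  | pi1 {A A' B} : Step A A' → Step (.pi A B) (.pi A' B)
  | pi2 {A B B'} : Step B B' → Step (.pi A B) (.pi A B')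
  | lam1 {A A' b} : Step A A' → Step (.lam A b) (.lam A' b)
  | lam2 {A b b'} : Step b b' → Step (.lam A b) (.lam A b')
  | app1 {a a' b} : Step a a' → Step (.app a b) (.app a' b)
  | app2 {a b b'} : Step b b' → Step (.app a b) (.app a b')

/-- Multi-step reduction. -/
def Steps : Expr → Expr → Prop := Relation.ReflTransGen Step

/-- Strong normalization: no infinite reduction sequences from `a`. -/
def SN (a : Expr) : Prop := Acc (fun x y => Step y x) a

/-- Base expressions: a variable applied to a list of arguments. -/
inductive Base : Expr → Prop
  | var (n : Nat) : Base (.var n)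
  | app {a} (b : Expr) : Base a → Base (.app a b)

/-- Key-redex contraction: `KeyRed a b` means `a` has a key redex and
contracting it yields `b` (i.e. `b = red_k a`). -/
inductive KeyRed : Expr → Expr → Prop
  | beta (A b a : Expr) : KeyRed (.app (.lam A b) a) (Expr.subst a 0 b)
  | app {a a'} (b : Expr) : KeyRed a a' → KeyRed (.app a b) (.app a' b)

/-- `a` has a key redex. -/
def HasKey (a : Expr) : Prop := ∃ b, KeyRed a b

/-- Saturated sets of expressions. -/
def Saturated (S : Set Expr) : Prop :=
  (∀ a ∈ S, SN a) ∧
  (∀ a, Base a → SN a → a ∈ S) ∧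
  (∀ a b, SN a → KeyRed a b → b ∈ S → a ∈ S)

/-- Function space on sets of expressions. -/
def Arrow (S₁ S₂ : Set Expr) : Set Expr := {a | ∀ b ∈ S₁, Expr.app a b ∈ S₂}

namespace Expr

theorem lift_lift_of_le (d d' : Nat) (e : Expr) {i j : Nat} (h : i ≤ j) :
    lift d i (lift d' j e) = lift d' (j + d) (lift d i e) := by
  induction e generalizing i j <;> grind [lift]

theorem lift_lift_of_le_of_le (d d' : Nat) (e : Expr) {i j : Nat} (h₁ : i ≤ j) (h₂ : j ≤ i + d) :
    lift d' j (lift d i e) = lift (d + d') i e := by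
  induction e generalizing i j <;> grind [lift]

theorem lift_subst (d : Nat) (t u : Expr) {j k : Nat} (h : j ≤ k) :
    lift d k (subst u j t) = subst (lift d (k - j) u) j (lift d (k + 1) t) := by
  induction t generalizing j k <;> grind [lift, subst, lift_lift_of_le]

theorem subst_lift_of_le (e u : Expr) {i j k : Nat} (h : i + j ≤ k) :
    subst e k (lift j i u) = lift j i (subst e (k - j) u) := by
  induction u generalizing i k <;> grind [lift, subst, lift_lift_of_le_of_le]

theorem subst_lift_of_lt (w e : Expr) {i p d : Nat} (h₁ : i ≤ p) (h₂ : p < i + d) :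
    subst w p (lift d i e) = lift (d - 1) i e := by
  induction e generalizing i p <;> grind [lift, subst]

theorem subst_subst (e t u : Expr) {j k : Nat} (h : j ≤ k) :
    subst e k (subst u j t) = subst (subst e (k - j) u) j (subst e (k + 1) t) := by
  induction t generalizing j k <;> grind [lift, subst, subst_lift_of_le, subst_lift_of_lt]

end Expr

namespace Step

theorem lift {e e' : Expr} (h : Step e e') (d k : Nat) :
    Step (e.lift d k) (e'.lift d k) := by
  induction h generalizing k with
  | beta A b a =>
    rw [Expr.lift_subst _ _ _ (Nat.zero_le k), Nat.sub_zero]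
    exact beta _ _ _
  | pi1 _ ih => exact pi1 (ih k)
  | pi2 _ ih => exact pi2 (ih (k + 1))
  | lam1 _ ih => exact lam1 (ih k)
  | lam2 _ ih => exact lam2 (ih (k + 1))
  | app1 _ ih => exact app1 (ih k)
  | app2 _ ih => exact app2 (ih k)

theorem subst {t t' : Expr} (h : Step t t') (e : Expr) (k : Nat) :
    Step (Expr.subst e k t) (Expr.subst e k t') := by
  induction h generalizing k with
  | beta A b a =>
    rw [Expr.subst_subst _ _ _ (Nat.zero_le k), Nat.sub_zero]
    exact beta _ _ _
  | pi1 _ ih => exact pi1 (ih k)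
  | pi2 _ ih => exact pi2 (ih (k + 1))
  | lam1 _ ih => exact lam1 (ih k)
  | lam2 _ ih => exact lam2 (ih (k + 1))
  | app1 _ ih => exact app1 (ih k)
  | app2 _ ih => exact app2 (ih k)

end Step

namespace Steps

theorem map (f : Expr → Expr) (hf : ∀ x y, Step x y → Step (f x) (f y)) {a b : Expr}
    (h : Steps a b) : Steps (f a) (f b) :=
  Relation.ReflTransGen.lift f hf _ _ h

theorem lift {e e' : Expr} (h : Steps e e') (d k : Nat) : Steps (e.lift d k) (e'.lift d k) :=
  h.map _ fun _ _ hs => hs.lift d k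

theorem pi {A A' B B' : Expr} (hA : Steps A A') (hB : Steps B B') :
    Steps (.pi A B) (.pi A' B') :=
  (hA.map (.pi · B) fun _ _ => .pi1).trans (hB.map (.pi A') fun _ _ => .pi2)

theorem lam {A A' b b' : Expr} (hA : Steps A A') (hb : Steps b b') :
    Steps (.lam A b) (.lam A' b') :=
  (hA.map (.lam · b) fun _ _ => .lam1).trans (hb.map (.lam A') fun _ _ => .lam2)

theorem app {a a' b b' : Expr} (ha : Steps a a') (hb : Steps b b') :
    Steps (.app a b) (.app a' b') :=
  (ha.map (.app · b) fun _ _ => .app1).trans (hb.map (.app a') fun _ _ => .app2)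

theorem subst_left {e e' : Expr} (h : Steps e e') (t : Expr) (k : Nat) :
    Steps (Expr.subst e k t) (Expr.subst e' k t) := by
  induction t generalizing k with
  | sort => exact .refl
  | var n =>
    simp only [Expr.subst]
    split_ifs
    · exact .refl
    · exact h.lift k 0
    · exact .refl
  | pi A B ihA ihB => exact pi (ihA k) (ihB (k + 1))
  | lam A b ihA ihb => exact lam (ihA k) (ihb (k + 1))
  | app a b iha ihb => exact app (iha k) (ihb k)

end Steps

theorem Step.exists_keyRed_of_redex {A t u b : Expr} (hs : Step (.app (.lam A t) u) b)
    (hb : b ≠ Expr.subst u 0 t) : ∃ kb, KeyRed b kb ∧ Steps (Expr.subst u 0 t) kb := by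
  cases hs with
  | beta => exact absurd rfl hb
  | app1 hf =>
    cases hf with
    | lam1 => exact ⟨_, .beta _ _ _, .refl⟩
    | lam2 ht => exact ⟨_, .beta _ _ _, .single (ht.subst u 0)⟩
  | app2 hu => exact ⟨_, .beta _ _ _, Steps.subst_left (.single hu) t 0⟩

/-- If `a` has key redex with contractum `ka`, and `a ⇝ b` without contracting
that key redex, then `b` has a key redex and `red_k a ⇝* red_k b`. -/
theorem key_redex_step {a ka b : Expr}
    (hk : KeyRed a ka) (hs : Step a b) (hne : ¬ KeyRed a b) :
    ∃ kb, KeyRed b kb ∧ Steps ka kb := by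
  induction hk generalizing b with
  | beta A t u => exact hs.exists_keyRed_of_redex fun hb => hne (hb ▸ .beta A t u)
  | app c hf ih =>
    cases hs with
    | beta => cases hf
    | app1 hs =>
      obtain ⟨kb, hkb, hsteps⟩ := ih hs fun h => hne (.app c h)
      exact ⟨_, .app c hkb, hsteps.app .refl⟩
    | app2 hs => exact ⟨_, .app _ hf, .single (.app2 hs)⟩
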